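/- Let X ⊆ ℝ^n be bounded, let 0 < α ≤ 1 ≤ β < ∞ and C > 0, and let f : X → ℝ^n be a homeomorphism onto its image satisfying C^{−1}·|x − x'|^β ≤ |f(x) − f(x')| ≤ C·|x − x'|^α for all x, x' ∈ X (an (α,β)-bi-Hölder homeomorphism). Then for every 0 < θ < α/β: ((1 − βθ/α)/(β(1 − θ)))·dim_{A,reg}^{βθ/α}(X) ≤ dim_{A,reg}^θ(f(X)) ≤ ((1 − αθ/β)/(α(1 − θ)))·dim_{A,reg}^{αθ/β}(X). -/

import Mathlib

/-!
Write the bi-Hölder condition as `c⁻¹ |x - y|^b ≤ |h x - h y| ≤ c |x - y|^a`. The lower bound puts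
`B(h x, R) ∩ h(A)` inside the image of `B(x, ρ) ∩ A` with `ρ = (cR)^{1/b}`. Cover that set by
boundedly many balls of radius `ℛ = min ρ (1/2)` (a single ball, or a fixed `1/2`-net of `A`), and
each of those at scale `r₅ = min ((r/c)^{1/a}) (ℛ^{1/φ})` using the spectrum of `A` at
`φ = aθ/b`; by the upper bound the images of these pieces have diameter at most `c r₅^a ≤ r`.
The constraint `r ≤ R^{1/θ}` converts the resulting count `(ℛ/r₅)^s` into a constant times
`(R/r)^{s (1 - φ) / (a (1 - θ))}`. Applied to `f`, and to its inverse, which is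
`(1/β, 1/α)`-bi-Hölder, this gives the two inequalities.
-/

open Set Metric
open scoped ENNReal

noncomputable section

/-- Covering number: the smallest number of sets of diameter at most `r` needed to
cover `F` (`∞` if no finite such cover exists). -/
def coverN {X : Type*} [PseudoMetricSpace X] (F : Set X) (r : ℝ) : ℝ≥0∞ :=
  sInf {m : ℝ≥0∞ | ∃ 𝒰 : Finset (Set X), (𝒰.card : ℝ≥0∞) = m ∧
    (∀ U ∈ 𝒰, EMetric.diam U ≤ ENNReal.ofReal r) ∧ F ⊆ ⋃ U ∈ 𝒰, U}

/-- Regularized Assouad spectrum `dim_{A,reg}^θ(F)`. -/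
def dimAreg {X : Type*} [PseudoMetricSpace X] (θ : ℝ) (F : Set X) : ℝ :=
  sInf {α : ℝ | 0 < α ∧ ∃ C : ℝ, 0 < C ∧ ∀ x ∈ F, ∀ r R : ℝ,
    0 < r → r ≤ R ^ (1/θ) → R ^ (1/θ) < R → R < 1 →
    coverN (closedBall x R ∩ F) r ≤ ENNReal.ofReal (C * (R/r) ^ α)}

/-- (Unregularized) Assouad spectrum `dim_A^θ(F)`. -/
def dimAspec {X : Type*} [PseudoMetricSpace X] (θ : ℝ) (F : Set X) : ℝ :=
  sInf {α : ℝ | 0 < α ∧ ∃ C : ℝ, 0 < C ∧ ∀ x ∈ F, ∀ R : ℝ, 0 < R → R < 1 →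
    coverN (closedBall x R ∩ F) (R ^ (1/θ)) ≤ ENNReal.ofReal (C * (R / R ^ (1/θ)) ^ α)}

/-- Upper box-counting dimension of a (bounded) set. -/
def dimBupper {X : Type*} [PseudoMetricSpace X] (F : Set X) : ℝ :=
  sInf {α : ℝ | 0 < α ∧ ∃ C : ℝ, 0 < C ∧ ∀ r : ℝ, 0 < r → r ≤ diam F →
    coverN F r ≤ ENNReal.ofReal (C * r ^ (-α))}

/-- Assouad dimension. -/
def dimA {X : Type*} [PseudoMetricSpace X] (F : Set X) : ℝ :=
  sInf {α : ℝ | 0 < α ∧ ∃ C : ℝ, 0 < C ∧ ∀ x ∈ F, ∀ r R : ℝ, 0 < r → r ≤ R →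
    coverN (closedBall x R ∩ F) r ≤ ENNReal.ofReal (C * (R/r) ^ α)}

/-- Quasi-Assouad dimension: `sup_{0<θ<1} dim_{A,reg}^θ(F)`. -/
def dimqA {X : Type*} [PseudoMetricSpace X] (F : Set X) : ℝ :=
  sSup ((fun θ => dimAreg θ F) '' Ioo (0:ℝ) 1)

open Classical in
/-- Phase-transition parameter `ρ(F)`. -/
def rhoPT {X : Type*} [PseudoMetricSpace X] (F : Set X) : ℝ :=
  if ∃ θ ∈ Ioo (0:ℝ) 1, dimAreg θ F = dimqA F
  then sInf {θ | θ ∈ Ioo (0:ℝ) 1 ∧ dimAreg θ F = dimqA F}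
  else 1

/-- The axes-parallel cube `Q(x,R) = ∏ [xᵢ - R, xᵢ + R]`. -/
def cubeQ {n : ℕ} (x : EuclideanSpace ℝ (Fin n)) (R : ℝ) : Set (EuclideanSpace ℝ (Fin n)) :=
  {y | ∀ i, x i - R ≤ y i ∧ y i ≤ x i + R}

/-- The generation-`m` dyadic subcube of `Q(x,R)` with index `k`. -/
def dyadicCube {n : ℕ} (x : EuclideanSpace ℝ (Fin n)) (R : ℝ) (m : ℕ)
    (k : Fin n → Fin (2 ^ m)) : Set (EuclideanSpace ℝ (Fin n)) :=
  {y | ∀ i, x i - R + (k i : ℝ) * (2 * R / 2 ^ m) ≤ y i ∧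
        y i ≤ x i - R + ((k i : ℝ) + 1) * (2 * R / 2 ^ m)}

/-- `N_d(B(x,R) ∩ F, m)`: the number of generation-`m` dyadic subcubes of `Q(x,R)`
that intersect `B(x,R) ∩ F`. -/
def Nd {n : ℕ} (x : EuclideanSpace ℝ (Fin n)) (R : ℝ)
    (F : Set (EuclideanSpace ℝ (Fin n))) (m : ℕ) : ℕ :=
  Nat.card {k : Fin n → Fin (2 ^ m) // (dyadicCube x R m k ∩ (closedBall x R ∩ F)).Nonempty}

/-- `f` is `η`-quasisymmetric on the set `S`. -/
def QSOn {X Y : Type*} [PseudoMetricSpace X] [PseudoMetricSpace Y]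
    (η : ℝ → ℝ) (f : X → Y) (S : Set X) : Prop :=
  ∀ x ∈ S, ∀ y ∈ S, ∀ z ∈ S, x ≠ z →
    dist (f x) (f y) ≤ η (dist x y / dist x z) * dist (f x) (f z)

/-- Distance between two sets. -/
def setDist {X : Type*} [PseudoMetricSpace X] (A B : Set X) : ℝ :=
  sInf {d : ℝ | ∃ a ∈ A, ∃ b ∈ B, d = dist a b}

end

lemma Real.rpow_one_div_lt_self {x θ : ℝ} (hx0 : 0 < x) (hx1 : x < 1) (hθ0 : 0 < θ) (hθ1 : θ < 1) :
    x ^ (1/θ) < x := by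
  simpa using Real.rpow_lt_rpow_of_exponent_gt hx0 hx1 ((one_lt_div hθ0).2 hθ1)

section CoveringNumber

variable {Z W : Type*} [PseudoMetricSpace Z] [PseudoMetricSpace W]

lemma coverN_le_card {F : Set Z} {r : ℝ} (𝒰 : Finset (Set Z))
    (hd : ∀ U ∈ 𝒰, ediam U ≤ ENNReal.ofReal r) (hF : F ⊆ ⋃ U ∈ 𝒰, U) :
    coverN F r ≤ 𝒰.card :=
  sInf_le ⟨𝒰, rfl, hd, hF⟩

lemma coverN_mono {F G : Set Z} (h : F ⊆ G) (r : ℝ) : coverN F r ≤ coverN G r :=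
  sInf_le_sInf fun _ ⟨𝒰, h𝒰, hd, hG⟩ => ⟨𝒰, h𝒰, hd, h.trans hG⟩

lemma exists_finset_card_eq_coverN {F : Set Z} {r : ℝ} (h : coverN F r ≠ ⊤) :
    ∃ 𝒰 : Finset (Set Z), (𝒰.card : ℝ≥0∞) = coverN F r ∧
      (∀ U ∈ 𝒰, ediam U ≤ ENNReal.ofReal r) ∧ F ⊆ ⋃ U ∈ 𝒰, U := by
  classical
  have hex : ∃ k : ℕ, ∃ 𝒰 : Finset (Set Z), 𝒰.card = k ∧
      (∀ U ∈ 𝒰, ediam U ≤ ENNReal.ofReal r) ∧ F ⊆ ⋃ U ∈ 𝒰, U := by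
    obtain ⟨_, ⟨𝒰, -, hd, hF⟩, -⟩ := sInf_lt_iff.1 (lt_top_iff_ne_top.2 h)
    exact ⟨_, 𝒰, rfl, hd, hF⟩
  obtain ⟨𝒰, h𝒰, hd, hF⟩ := Nat.find_spec hex
  refine ⟨𝒰, le_antisymm (le_sInf ?_) (coverN_le_card 𝒰 hd hF), hd, hF⟩
  rintro _ ⟨𝒱, rfl, hd', hF'⟩
  rw [h𝒰]
  exact_mod_cast Nat.find_min' hex ⟨𝒱, rfl, hd', hF'⟩

lemma coverN_union_le (F G : Set Z) (r : ℝ) :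
    coverN (F ∪ G) r ≤ coverN F r + coverN G r := by
  classical
  by_cases hF : coverN F r = ⊤
  · simp [hF]
  by_cases hG : coverN G r = ⊤
  · simp [hG]
  obtain ⟨𝒰, h𝒰, hdU, hFU⟩ := exists_finset_card_eq_coverN hF
  obtain ⟨𝒱, h𝒱, hdV, hGV⟩ := exists_finset_card_eq_coverN hG
  calc coverN (F ∪ G) r ≤ (𝒰 ∪ 𝒱).card := by
        refine coverN_le_card _ (by simpa [or_imp, forall_and] using ⟨hdU, hdV⟩) ?_
        rw [Finset.set_biUnion_union]
        exact union_subset_union hFU hGV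
    _ ≤ 𝒰.card + 𝒱.card := by exact_mod_cast Finset.card_union_le 𝒰 𝒱
    _ = coverN F r + coverN G r := by rw [h𝒰, h𝒱]

lemma coverN_biUnion_le {ι : Type*} (T : Finset ι) (G : ι → Set Z) (r : ℝ) :
    coverN (⋃ t ∈ T, G t) r ≤ ∑ t ∈ T, coverN (G t) r := by
  classical
  induction T using Finset.induction_on with
  | empty =>
    simpa using coverN_le_card (F := (∅ : Set Z)) (r := r) ∅ (by simp) (by simp)
  | insert t T ht ih =>
    rw [Finset.set_biUnion_insert, Finset.sum_insert ht]
    exact (coverN_union_le _ _ r).trans (by gcongr)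

lemma coverN_image_le {h : Z → W} {S : Set Z} {ρ r : ℝ} (hρ : 0 ≤ ρ)
    (hh : ∀ x ∈ S, ∀ y ∈ S, dist x y ≤ ρ → dist (h x) (h y) ≤ r) :
    coverN (h '' S) r ≤ coverN S ρ := by
  classical
  by_cases htop : coverN S ρ = ⊤
  · exact htop ▸ le_top
  obtain ⟨𝒰, h𝒰, hd, hS⟩ := exists_finset_card_eq_coverN htop
  calc coverN (h '' S) r ≤ (𝒰.image fun U => h '' (U ∩ S)).card := by
        refine coverN_le_card _ ?_ ?_
        · simp only [Finset.mem_image, forall_exists_index, and_imp]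
          rintro _ U hU rfl
          refine ediam_le ?_
          rintro _ ⟨u, ⟨huU, huS⟩, rfl⟩ _ ⟨v, ⟨hvU, hvS⟩, rfl⟩
          have huv := (edist_le_ediam_of_mem huU hvU).trans (hd U hU)
          rw [edist_dist]
          exact ENNReal.ofReal_le_ofReal (hh u huS v hvS ((edist_le_ofReal hρ).1 huv))
        · rintro _ ⟨u, huS, rfl⟩
          obtain ⟨U, hU, huU⟩ := mem_iUnion₂.1 (hS huS)
          exact mem_iUnion₂.2 ⟨_, Finset.mem_image_of_mem _ hU, u, ⟨huU, huS⟩, rfl⟩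
    _ ≤ 𝒰.card := by exact_mod_cast Finset.card_image_le
    _ = coverN S ρ := h𝒰

end CoveringNumber

section RegularizedAssouad

variable {Z : Type*} [PseudoMetricSpace Z]

def AregCoverBound (θ : ℝ) (F : Set Z) (s C : ℝ) : Prop :=
  ∀ x ∈ F, ∀ r R : ℝ, 0 < r → r ≤ R ^ (1/θ) → R ^ (1/θ) < R → R < 1 →
    coverN (closedBall x R ∩ F) r ≤ ENNReal.ofReal (C * (R/r) ^ s)

def IsAregExponent (θ : ℝ) (F : Set Z) (s : ℝ) : Prop :=
  0 < s ∧ ∃ C : ℝ, 0 < C ∧ AregCoverBound θ F s C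

lemma dimAreg_eq_sInf (θ : ℝ) (F : Set Z) : dimAreg θ F = sInf {s | IsAregExponent θ F s} :=
  rfl

lemma IsAregExponent.of_le {θ θ' s : ℝ} {F : Set Z} (h : IsAregExponent θ' F s) (hθ : 0 < θ)
    (hθθ' : θ ≤ θ') (hθ' : θ' < 1) : IsAregExponent θ F s := by
  obtain ⟨hs, C, hC, hbound⟩ := h
  refine ⟨hs, C, hC, fun x hx r R hr hrR hRR hR1 => ?_⟩
  have hR0 : 0 < R := (hr.trans_le hrR).trans hRR
  refine hbound x hx r R hr (hrR.trans ?_)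
    (Real.rpow_one_div_lt_self hR0 hR1 (hθ.trans_le hθθ') hθ') hR1
  exact Real.rpow_le_rpow_of_exponent_ge hR0 hR1.le (one_div_le_one_div_of_le hθ hθθ')

lemma dimAreg_le_mul_dimAreg {θ φ k : ℝ} {A B : Set Z} (hk : 0 < k)
    (h : ∀ s, IsAregExponent φ A s → IsAregExponent θ B (k * s))
    (hne : (∃ s, IsAregExponent θ B s) → ∃ s, IsAregExponent φ A s) :
    dimAreg θ B ≤ k * dimAreg φ A := by
  rw [dimAreg_eq_sInf, dimAreg_eq_sInf]
  by_cases hA : ∃ s, IsAregExponent φ A s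
  · obtain ⟨s₀, hs₀⟩ := hA
    have hbdd : BddBelow {s | IsAregExponent θ B s} := ⟨0, fun s hs => hs.1.le⟩
    rw [← div_le_iff₀' hk]
    exact le_csInf ⟨s₀, hs₀⟩ fun s hs => (div_le_iff₀' hk).2 (csInf_le hbdd (h s hs))
  · -- both exponent sets are empty, and `sInf ∅ = 0` in `ℝ`
    have hB : ¬ ∃ s, IsAregExponent θ B s := fun hB => hA (hne hB)
    simp [not_exists.1 hA, not_exists.1 hB]

end RegularizedAssouad

section BiHolder

variable {Z W : Type*} [PseudoMetricSpace Z] [PseudoMetricSpace W]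

def BiHolderOnWith (c a b : ℝ) (h : Z → W) (A : Set Z) : Prop :=
  ∀ x ∈ A, ∀ y ∈ A, c⁻¹ * dist x y ^ b ≤ dist (h x) (h y) ∧ dist (h x) (h y) ≤ c * dist x y ^ a

namespace BiHolderOnWith

variable {c c' a b : ℝ} {h : Z → W} {A : Set Z}

lemma of_const_le (hh : BiHolderOnWith c a b h A) (hc : 0 < c) (hcc' : c ≤ c') :
    BiHolderOnWith c' a b h A := fun x hx y hy =>
  ⟨(mul_le_mul_of_nonneg_right (inv_anti₀ hc hcc') (by positivity)).trans (hh x hx y hy).1,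
    (hh x hx y hy).2.trans (mul_le_mul_of_nonneg_right hcc' (by positivity))⟩

lemma dist_le (hh : BiHolderOnWith c a b h A) (hc : 0 < c) (hb : 0 < b) {x y : Z} (hx : x ∈ A)
    (hy : y ∈ A) : dist x y ≤ (c * dist (h x) (h y)) ^ b⁻¹ := by
  rw [Real.le_rpow_inv_iff_of_pos dist_nonneg (by positivity) hb, ← inv_mul_le_iff₀ hc]
  exact (hh x hx y hy).1

lemma closedBall_inter_image_subset (hh : BiHolderOnWith c a b h A) (hc : 0 < c) (hb : 0 < b)
    {x : Z} (hx : x ∈ A) (R : ℝ) :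
    closedBall (h x) R ∩ h '' A ⊆ h '' (closedBall x ((c * R) ^ b⁻¹) ∩ A) := by
  rintro _ ⟨hyR, y, hy, rfl⟩
  refine ⟨y, ⟨(hh.dist_le hc hb hy hx).trans ?_, hy⟩, rfl⟩
  exact Real.rpow_le_rpow (by positivity) (by gcongr; exact mem_closedBall.1 hyR) (by positivity)

lemma isBounded_image (hh : BiHolderOnWith c a b h A) (hc : 0 ≤ c) (ha : 0 < a)
    (hA : Bornology.IsBounded A) : Bornology.IsBounded (h '' A) := by
  obtain ⟨M, hM⟩ := isBounded_iff.1 hA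
  refine isBounded_image_iff.2 ⟨c * M ^ a, fun x hx y hy => (hh x hx y hy).2.trans ?_⟩
  gcongr
  exact hM hx hy

end BiHolderOnWith

end BiHolder

section BiHolderMetric

variable {Z W : Type*} [MetricSpace Z] [PseudoMetricSpace W] {c a b : ℝ} {h : Z → W} {A : Set Z}

lemma BiHolderOnWith.injOn (hh : BiHolderOnWith c a b h A) (hc : 0 < c) (hb : 0 < b) :
    InjOn h A := fun x hx y hy hxy => by
  have := hh.dist_le hc hb hx hy
  rwa [hxy, dist_self, mul_zero, Real.zero_rpow (inv_ne_zero hb.ne'), dist_le_zero] at this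

lemma BiHolderOnWith.invFunOn [Nonempty Z] (hh : BiHolderOnWith c a b h A) (hc : 1 ≤ c)
    (ha : 0 < a) (hab : a ≤ b) :
    BiHolderOnWith (c ^ a⁻¹) b⁻¹ a⁻¹ (Function.invFunOn h A) (h '' A) := by
  have hc0 : 0 < c := one_pos.trans_le hc
  have hinv := (hh.injOn hc0 (ha.trans_le hab)).leftInvOn_invFunOn
  rintro _ ⟨x, hx, rfl⟩ _ ⟨y, hy, rfl⟩
  rw [hinv hx, hinv hy]
  constructor
  · rw [← Real.inv_rpow hc0.le, ← Real.mul_rpow (by positivity) dist_nonneg,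
      Real.rpow_inv_le_iff_of_pos (by positivity) dist_nonneg ha, inv_mul_le_iff₀ hc0]
    exact (hh x hx y hy).2
  · calc dist x y ≤ (c * dist (h x) (h y)) ^ b⁻¹ := hh.dist_le hc0 (ha.trans_le hab) hx hy
      _ = c ^ b⁻¹ * dist (h x) (h y) ^ b⁻¹ := Real.mul_rpow hc0.le dist_nonneg
      _ ≤ c ^ a⁻¹ * dist (h x) (h y) ^ b⁻¹ := by gcongr

end BiHolderMetric

lemma TotallyBounded.exists_card_le_cover_closedBall_min {Z : Type*} [PseudoMetricSpace Z]
    {A : Set Z} (hA : TotallyBounded A) {ε : ℝ} (hε : 0 < ε) :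
    ∃ M : ℕ, ∀ x ∈ A, ∀ ρ : ℝ, ∃ T : Finset Z, T.card ≤ M ∧ (∀ t ∈ T, t ∈ A) ∧
      closedBall x ρ ∩ A ⊆ ⋃ t ∈ T, closedBall t (min ρ ε) := by
  classical
  obtain ⟨N, hNA, hN, hAN⟩ := finite_approx_of_totallyBounded hA ε hε
  refine ⟨hN.toFinset.card + 1, fun x hx ρ => ?_⟩
  rcases le_total ρ ε with hρ | hρ
  · refine ⟨{x}, by simp, by simpa using hx, ?_⟩
    simp [min_eq_left hρ]
  · refine ⟨hN.toFinset, Nat.le_succ _, fun t ht => hNA (hN.mem_toFinset.1 ht), ?_⟩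
    intro y hy
    obtain ⟨t, ht, hyt⟩ := mem_iUnion₂.1 (hAN hy.2)
    rw [min_eq_right hρ]
    exact mem_iUnion₂.2 ⟨t, hN.mem_toFinset.2 ht, ball_subset_closedBall hyt⟩

section ScaleEstimates

variable {a b c φ θ s r R : ℝ}

lemma rpow_mul_rpow_neg_le_div_rpow (ha : 0 < a) (hab : a ≤ b) (hφ : 0 < φ) (hθ1 : θ < 1)
    (hφθ : b * φ = a * θ) (hs : 0 ≤ s) (hr : 0 < r) (hR : 0 < R) (hrR : r ≤ R ^ (1/θ)) :
    R ^ (b⁻¹ * s) * r ^ (-(a⁻¹ * s)) ≤ (R/r) ^ ((1 - φ) / (a * (1 - θ)) * s) := by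
  have hb : 0 < b := ha.trans_le hab
  have hθ0 : 0 < θ := by nlinarith
  set k := (1 - φ) / (a * (1 - θ))
  have he : 0 ≤ k * s - a⁻¹ * s := by
    have : a⁻¹ ≤ k := by
      rw [le_div_iff₀ (by nlinarith)]
      field_simp
      nlinarith
    nlinarith
  have key : R ^ (b⁻¹ * s) * (R ^ (1/θ)) ^ (k * s - a⁻¹ * s) = R ^ (k * s) := by
    rw [← Real.rpow_mul hR.le, ← Real.rpow_add hR]
    congr 1
    have h1θ : 1 - θ ≠ 0 := by linarith
    simp only [k]
    field_simp
    linear_combination (-s * (1 - θ)) * hφθ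
  calc R ^ (b⁻¹ * s) * r ^ (-(a⁻¹ * s))
      = R ^ (b⁻¹ * s) * r ^ (k * s - a⁻¹ * s) * r ^ (-(k * s)) := by
        rw [mul_assoc, ← Real.rpow_add hr]; ring_nf
    _ ≤ R ^ (b⁻¹ * s) * (R ^ (1/θ)) ^ (k * s - a⁻¹ * s) * r ^ (-(k * s)) := by gcongr
    _ = (R/r) ^ (k * s) := by
        rw [key, Real.div_rpow hR.le hr.le, Real.rpow_neg hr.le, div_eq_mul_inv]

lemma rpow_rpow_inv_le_div_rpow (ha : 0 < a) (hab : a ≤ b) (hφ : 0 < φ) (hθ1 : θ < 1)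
    (hφθ : b * φ = a * θ) (hc : 1 ≤ c) (hs : 0 ≤ s) (hr : 0 < r) (hR : 0 < R)
    (hrR : r ≤ R ^ (1/θ)) :
    ((c * R) ^ b⁻¹) ^ ((1 - 1/φ) * s) ≤ (R/r) ^ ((1 - φ) / (a * (1 - θ)) * s) := by
  have hb : 0 < b := ha.trans_le hab
  have hθ0 : 0 < θ := by nlinarith
  have h1θ : 1 - θ ≠ 0 := by linarith
  set k := (1 - φ) / (a * (1 - θ))
  have hk : 0 ≤ k := div_nonneg (by nlinarith) (by nlinarith)
  have hp : b⁻¹ * ((1 - 1/φ) * s) = (1 - 1/θ) * (k * s) := by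
    simp only [k]
    field_simp
    linear_combination (s * (1 - θ) * (1 - φ)) * hφθ
  have hp0 : (1 - 1/θ) * (k * s) ≤ 0 := by
    refine mul_nonpos_of_nonpos_of_nonneg ?_ (by positivity)
    rw [sub_nonpos, le_div_iff₀ hθ0]
    linarith
  calc ((c * R) ^ b⁻¹) ^ ((1 - 1/φ) * s) = (c * R) ^ ((1 - 1/θ) * (k * s)) := by
        rw [← Real.rpow_mul (by positivity), hp]
    _ ≤ R ^ ((1 - 1/θ) * (k * s)) :=
        Real.rpow_le_rpow_of_nonpos hR (le_mul_of_one_le_left hR.le hc) hp0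
    _ = (R / R ^ (1/θ)) ^ (k * s) := by
        rw [Real.rpow_mul hR.le, Real.rpow_sub hR, Real.rpow_one]
    _ ≤ (R/r) ^ (k * s) := by gcongr

lemma min_rpow_le_add {x y p : ℝ} (hx : 0 ≤ x) (hy : 0 ≤ y) : min x y ^ p ≤ x ^ p + y ^ p := by
  rcases min_cases x y with ⟨h, -⟩ | ⟨h, -⟩ <;> rw [h]
  · exact le_add_of_nonneg_right (Real.rpow_nonneg hy p)
  · exact le_add_of_nonneg_left (Real.rpow_nonneg hx p)

lemma div_min_rpow_le_add {x u v p : ℝ} (hx : 0 ≤ x) (hu : 0 ≤ u) (hv : 0 ≤ v) :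
    (x / min u v) ^ p ≤ (x / u) ^ p + (x / v) ^ p := by
  rcases min_cases u v with ⟨h, -⟩ | ⟨h, -⟩ <;> rw [h]
  · exact le_add_of_nonneg_right (Real.rpow_nonneg (div_nonneg hx hv) p)
  · exact le_add_of_nonneg_left (Real.rpow_nonneg (div_nonneg hx hu) p)

lemma min_div_min_rpow_le {ε : ℝ} (ha : 0 < a) (hab : a ≤ b) (hφ : 0 < φ) (hθ1 : θ < 1)
    (hφθ : b * φ = a * θ) (hc : 1 ≤ c) (hs : 0 ≤ s) (hε : 0 < ε) (hr : 0 < r) (hR : 0 < R)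
    (hrR : r ≤ R ^ (1/θ)) (hrR' : r ≤ R) :
    (min ((c * R) ^ b⁻¹) ε / min ((r / c) ^ a⁻¹) (min ((c * R) ^ b⁻¹) ε ^ (1/φ))) ^ s ≤
      (c ^ ((b⁻¹ + a⁻¹) * s) + 1 + ε ^ ((1 - 1/φ) * s)) *
        (R/r) ^ ((1 - φ) / (a * (1 - θ)) * s) := by
  have hc0 : 0 < c := one_pos.trans_le hc
  set k := (1 - φ) / (a * (1 - θ))
  set ρ := (c * R) ^ b⁻¹
  set ℛ := min ρ ε
  set u := (r / c) ^ a⁻¹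
  have hρ : 0 < ρ := by positivity
  have hℛ : 0 < ℛ := lt_min hρ hε
  have hk : 0 ≤ k := div_nonneg (by nlinarith) (by nlinarith)
  have hRr : 1 ≤ (R/r) ^ (k * s) := Real.one_le_rpow ((one_le_div hr).2 hrR') (by positivity)
  have hu : (ℛ / u) ^ s ≤ c ^ ((b⁻¹ + a⁻¹) * s) * (R/r) ^ (k * s) :=
    calc (ℛ / u) ^ s ≤ (ρ / u) ^ s := by gcongr; exact min_le_left _ _
      _ = c ^ ((b⁻¹ + a⁻¹) * s) * (R ^ (b⁻¹ * s) * r ^ (-(a⁻¹ * s))) := by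
        rw [Real.div_rpow hρ.le (by positivity), ← Real.rpow_mul (by positivity),
          ← Real.rpow_mul (by positivity), Real.mul_rpow hc0.le hR.le, Real.div_rpow hr.le hc0.le,
          Real.rpow_neg hr.le, add_mul, Real.rpow_add hc0]
        field_simp
      _ ≤ c ^ ((b⁻¹ + a⁻¹) * s) * (R/r) ^ (k * s) := by
        gcongr
        exact rpow_mul_rpow_neg_le_div_rpow ha hab hφ hθ1 hφθ hs hr hR hrR
  have hv : (ℛ / ℛ ^ (1/φ)) ^ s ≤ (1 + ε ^ ((1 - 1/φ) * s)) * (R/r) ^ (k * s) :=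
    calc (ℛ / ℛ ^ (1/φ)) ^ s
        = ℛ ^ ((1 - 1/φ) * s) := by
          rw [Real.rpow_mul hℛ.le, Real.rpow_sub hℛ, Real.rpow_one]
      _ ≤ ρ ^ ((1 - 1/φ) * s) + ε ^ ((1 - 1/φ) * s) := min_rpow_le_add hρ.le hε.le
      _ ≤ (R/r) ^ (k * s) + ε ^ ((1 - 1/φ) * s) * (R/r) ^ (k * s) := by
        gcongr
        · exact rpow_rpow_inv_le_div_rpow ha hab hφ hθ1 hφθ hc hs hr hR hrR
        · exact le_mul_of_one_le_right (by positivity) hRr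
      _ = (1 + ε ^ ((1 - 1/φ) * s)) * (R/r) ^ (k * s) := by ring
  calc (ℛ / min u (ℛ ^ (1/φ))) ^ s ≤ (ℛ / u) ^ s + (ℛ / ℛ ^ (1/φ)) ^ s :=
        div_min_rpow_le_add hℛ.le (by positivity) (by positivity)
    _ ≤ _ := add_le_add hu hv
    _ = _ := by ring

end ScaleEstimates

section Transfer

variable {Z W : Type*} [PseudoMetricSpace Z] [PseudoMetricSpace W] {h : Z → W} {A : Set Z}
  {a b c φ θ s C : ℝ}

lemma AregCoverBound.coverN_image_closedBall_inter_le (hbound : AregCoverBound φ A s C)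
    (hh : BiHolderOnWith c a b h A) (hc : 0 < c) (ha : 0 < a) (hφ0 : 0 < φ) (hφ1 : φ < 1)
    {t : Z} (ht : t ∈ A) {ℛ r : ℝ} (hℛ0 : 0 < ℛ) (hℛ1 : ℛ < 1) (hr : 0 < r) :
    coverN (h '' (closedBall t ℛ ∩ A)) r ≤
      ENNReal.ofReal (C * (ℛ / min ((r / c) ^ a⁻¹) (ℛ ^ (1/φ))) ^ s) := by
  set r₅ := min ((r / c) ^ a⁻¹) (ℛ ^ (1/φ))
  have hr₅ : 0 < r₅ := lt_min (by positivity) (by positivity)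
  have hhr₅ : c * r₅ ^ a ≤ r := by
    calc c * r₅ ^ a ≤ c * ((r / c) ^ a⁻¹) ^ a := by gcongr; exact min_le_left _ _
      _ = r := by rw [Real.rpow_inv_rpow (by positivity) ha.ne', mul_div_cancel₀ _ hc.ne']
  calc coverN (h '' (closedBall t ℛ ∩ A)) r ≤ coverN (closedBall t ℛ ∩ A) r₅ :=
        coverN_image_le hr₅.le fun x hx y hy hxy =>
          (hh x hx.2 y hy.2).2.trans ((by gcongr : c * dist x y ^ a ≤ c * r₅ ^ a).trans hhr₅)
    _ ≤ _ := hbound t ht r₅ ℛ hr₅ (min_le_right _ _)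
          (Real.rpow_one_div_lt_self hℛ0 hℛ1 hφ0 hφ1) hℛ1

theorem IsAregExponent.image_of_biHolderOnWith (hA : TotallyBounded A)
    (hh : BiHolderOnWith c a b h A) (hc : 1 ≤ c) (ha : 0 < a) (hab : a ≤ b) (hφ : 0 < φ)
    (hθ1 : θ < 1) (hφθ : b * φ = a * θ) (hs : IsAregExponent φ A s) :
    IsAregExponent θ (h '' A) ((1 - φ) / (a * (1 - θ)) * s) := by
  obtain ⟨hs0, C, hC, hbound⟩ := hs
  have hc0 : 0 < c := one_pos.trans_le hc
  have hb : 0 < b := ha.trans_le hab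
  have hφ1 : φ < 1 := by nlinarith
  have hk : 0 < (1 - φ) / (a * (1 - θ)) := div_pos (by linarith) (by nlinarith)
  obtain ⟨M, hM⟩ := hA.exists_card_le_cover_closedBall_min one_half_pos
  set K := c ^ ((b⁻¹ + a⁻¹) * s) + 1 + (1/2 : ℝ) ^ ((1 - 1/φ) * s)
  refine ⟨mul_pos hk hs0, (M + 1) * (C * K), by positivity, ?_⟩
  rintro _ ⟨x, hx, rfl⟩ r R hr hrR hRR hR1
  have hR0 : 0 < R := (hr.trans_le hrR).trans hRR
  obtain ⟨T, hTM, hTA, hT⟩ := hM x hx ((c * R) ^ b⁻¹)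
  set ℛ := min ((c * R) ^ b⁻¹) (1/2)
  have hℛ0 : 0 < ℛ := lt_min (by positivity) one_half_pos
  have hℛ1 : ℛ < 1 := (min_le_right _ _).trans_lt one_half_lt_one
  have hcover : closedBall (h x) R ∩ h '' A ⊆ ⋃ t ∈ T, h '' (closedBall t ℛ ∩ A) := by
    refine (hh.closedBall_inter_image_subset hc0 hb hx R).trans ?_
    rw [← image_iUnion₂]
    refine image_mono fun y hy => ?_
    obtain ⟨t, ht, hyt⟩ := mem_iUnion₂.1 (hT hy)
    exact mem_iUnion₂.2 ⟨t, ht, hyt, hy.2⟩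
  calc coverN (closedBall (h x) R ∩ h '' A) r
      ≤ ∑ t ∈ T, coverN (h '' (closedBall t ℛ ∩ A)) r :=
        (coverN_mono hcover r).trans (coverN_biUnion_le _ _ _)
    _ ≤ ∑ t ∈ T, ENNReal.ofReal (C * (ℛ / min ((r / c) ^ a⁻¹) (ℛ ^ (1/φ))) ^ s) :=
        Finset.sum_le_sum fun t ht => hbound.coverN_image_closedBall_inter_le hh hc0 ha hφ hφ1
          (hTA t ht) hℛ0 hℛ1 hr
    _ = ENNReal.ofReal (T.card * (C * (ℛ / min ((r / c) ^ a⁻¹) (ℛ ^ (1/φ))) ^ s)) := by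
        rw [Finset.sum_const, nsmul_eq_mul, ENNReal.ofReal_mul (Nat.cast_nonneg T.card),
          ENNReal.ofReal_natCast]
    _ ≤ ENNReal.ofReal ((M + 1) * (C * K) * (R / r) ^ ((1 - φ) / (a * (1 - θ)) * s)) := by
        refine ENNReal.ofReal_le_ofReal ?_
        calc (T.card : ℝ) * (C * (ℛ / min ((r / c) ^ a⁻¹) (ℛ ^ (1/φ))) ^ s)
            ≤ (M + 1) * (C * (K * (R / r) ^ ((1 - φ) / (a * (1 - θ)) * s))) := by
              gcongr
              · exact_mod_cast hTM.trans M.le_succ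
              · exact min_div_min_rpow_le ha hab hφ hθ1 hφθ hc hs0.le one_half_pos hr hR0 hrR
                  (hrR.trans hRR.le)
          _ = _ := by ring

end Transfer

theorem BiHolderOnWith.isAregExponent_of_image {Z W : Type*} [MetricSpace Z] [Nonempty Z]
    [PseudoMetricSpace W] {h : Z → W} {A : Set Z} {a b c θ s : ℝ}
    (hA : TotallyBounded (h '' A)) (hh : BiHolderOnWith c a b h A) (hc : 1 ≤ c) (ha : 0 < a)
    (hab : a ≤ b) (hθ0 : 0 < θ) (hθ1 : b * θ / a < 1) (hs : IsAregExponent θ (h '' A) s) :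
    IsAregExponent (b * θ / a) A (((1 - b * θ / a) / (b * (1 - θ)))⁻¹ * s) := by
  have hb : 0 < b := ha.trans_le hab
  have hinv := (hh.injOn (one_pos.trans_le hc) hb).leftInvOn_invFunOn
  have := hs.image_of_biHolderOnWith hA (hh.invFunOn hc ha hab)
    (Real.one_le_rpow hc (inv_nonneg.2 ha.le)) (inv_pos.2 hb) (inv_anti₀ ha hab) hθ0 hθ1
    (by field_simp)
  rw [hinv.image_image] at this
  have hne : 1 - b * θ / a ≠ 0 := by linarith
  convert this using 2
  field_simp

/-- distortion of the regularized Assouad spectrum under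
`(α,β)`-bi-Hölder homeomorphisms. -/
theorem stmt17 {n : ℕ} (X : Set (EuclideanSpace ℝ (Fin n))) (hX : Bornology.IsBounded X)
    (α β C : ℝ) (hα0 : 0 < α) (hα1 : α ≤ 1) (hβ : 1 ≤ β) (hC : 0 < C)
    (f : EuclideanSpace ℝ (Fin n) → EuclideanSpace ℝ (Fin n))
    (hf : ∀ x ∈ X, ∀ x' ∈ X,
      C⁻¹ * dist x x' ^ β ≤ dist (f x) (f x') ∧ dist (f x) (f x') ≤ C * dist x x' ^ α)
    (θ : ℝ) (hθ0 : 0 < θ) (hθ1 : θ < α / β) :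
    ((1 - β * θ / α) / (β * (1 - θ))) * dimAreg (β * θ / α) X ≤ dimAreg θ (f '' X) ∧
    dimAreg θ (f '' X) ≤ ((1 - α * θ / β) / (α * (1 - θ))) * dimAreg (α * θ / β) X := by
  have hβ0 : 0 < β := one_pos.trans_le hβ
  have hαβ : α ≤ β := hα1.trans hβ
  have hβθ : β * θ < α := by rwa [lt_div_iff₀ hβ0, mul_comm] at hθ1
  have hθ1' : θ < 1 := by nlinarith
  have hβθα : β * θ / α < 1 := (div_lt_one hα0).2 hβθ
  have hθθ : α * θ / β ≤ β * θ / α := by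
    rw [div_le_div_iff₀ hβ0 hα0]
    nlinarith [mul_le_mul hαβ hαβ hα0.le hβ0.le]
  have hf' : BiHolderOnWith (max C 1) α β f X := BiHolderOnWith.of_const_le hf hC (le_max_left _ _)
  have hY : TotallyBounded (f '' X) := (hf'.isBounded_image (by positivity) hα0 hX)
    |>.isCompact_closure.totallyBounded.subset subset_closure
  have up (s : ℝ) (hs : IsAregExponent (α * θ / β) X s) :=
    hs.image_of_biHolderOnWith (hX.isCompact_closure.totallyBounded.subset subset_closure) hf'
      (le_max_right _ _) hα0 hαβ (by positivity) hθ1' (by field_simp)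
  have down (s : ℝ) (hs : IsAregExponent θ (f '' X) s) :=
    hf'.isAregExponent_of_image hY (le_max_right _ _) hα0 hαβ hθ0 hβθα hs
  have mono (s : ℝ) (hs : IsAregExponent (β * θ / α) X s) : IsAregExponent (α * θ / β) X s :=
    hs.of_le (by positivity) hθθ hβθα
  have hk : 0 < (1 - β * θ / α) / (β * (1 - θ)) := div_pos (by linarith) (by nlinarith)
  exact ⟨(le_inv_mul_iff₀ hk).1 (dimAreg_le_mul_dimAreg (inv_pos.2 hk) down
      fun ⟨s, hs⟩ => ⟨_, up s (mono s hs)⟩),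
    dimAreg_le_mul_dimAreg (div_pos (by nlinarith) (by nlinarith)) up
      fun ⟨s, hs⟩ => ⟨_, mono _ (down s hs)⟩⟩
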